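/- arXiv:2408.11633 — 2 statements merged into one kernel-verified Lean document; each statement's English description precedes it below -/
import Mathlib

section
/- For q > 3 and x ≥ 0 define f_q(x) = exp(((2q−1)^{2q} + x)^{1/(2q)}). Then f_q is convex on [0, ∞). -/
/-!
With `p = 1/(2q)` and `a = (2q-1)^(2q)`, `f_q` is `y ↦ exp (y ^ p)` translated by `a`. The second
derivative of `exp (y ^ p)` is `exp (y ^ p) p y ^ (p - 2) (p y ^ p - (1 - p))`, nonnegative as
soon as `p y ^ p ≥ 1 - p`. Since `y ^ p` increases, it suffices to check this at `y = a`, where it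
holds with equality: `p a ^ p = (2q-1)/(2q) = 1 - p`.
-/

open Real Set

lemma hasDerivAt_exp_rpow_const {p y : ℝ} (hy : 0 < y) :
    HasDerivAt (fun y => exp (y ^ p)) (exp (y ^ p) * (p * y ^ (p - 1))) y :=
  (hasDerivAt_rpow_const (Or.inl hy.ne')).exp

lemma hasDerivAt_exp_rpow_mul_rpow_sub_one {p y : ℝ} (hy : 0 < y) :
    HasDerivAt (fun y => exp (y ^ p) * (p * y ^ (p - 1)))
      (exp (y ^ p) * p * y ^ (p - 2) * (p * y ^ p - (1 - p))) y := by
  have h := (hasDerivAt_exp_rpow_const (p := p) hy).mul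
    ((hasDerivAt_rpow_const (p := p - 1) (Or.inl hy.ne')).const_mul p)
  refine h.congr_deriv ?_
  have hsq : y ^ (p - 1) * y ^ (p - 1) = y ^ (p - 2) * y ^ p := by
    rw [← rpow_add hy, ← rpow_add hy]; ring_nf
  rw [show p - 1 - 1 = p - 2 by ring]
  linear_combination (exp (y ^ p) * p * p) * hsq

theorem convexOn_exp_rpow_Ici {p c : ℝ} (hp : 0 < p) (hc : 0 ≤ c) (hpc : 1 - p ≤ p * c ^ p) :
    ConvexOn ℝ (Ici c) (fun y => exp (y ^ p)) := by
  refine convexOn_of_hasDerivWithinAt2_nonneg (convex_Ici c)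
    (f' := fun y => exp (y ^ p) * (p * y ^ (p - 1)))
    (f'' := fun y => exp (y ^ p) * p * y ^ (p - 2) * (p * y ^ p - (1 - p)))
    (fun y _ => (continuousAt_rpow_const y p (Or.inr hp.le)).rexp.continuousWithinAt)
    (fun y hy => ?_) (fun y hy => ?_) (fun y hy => ?_)
  all_goals rw [interior_Ici, mem_Ioi] at hy
  · exact (hasDerivAt_exp_rpow_const (hc.trans_lt hy)).hasDerivWithinAt
  · exact (hasDerivAt_exp_rpow_mul_rpow_sub_one (hc.trans_lt hy)).hasDerivWithinAt
  · have hy0 : 0 < y := hc.trans_lt hy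
    have : p * c ^ p ≤ p * y ^ p := by gcongr
    have : 0 ≤ p * y ^ p - (1 - p) := by linarith
    positivity

theorem convex_fq (q : ℝ) (hq : 3 < q) :
    ConvexOn ℝ (Set.Ici (0 : ℝ))
      (fun x : ℝ => Real.exp (((2 * q - 1) ^ (2 * q) + x) ^ (1 / (2 * q)))) := by
  set a := (2 * q - 1) ^ (2 * q)
  have ha : a ^ (1 / (2 * q)) = 2 * q - 1 := by
    rw [one_div, rpow_rpow_inv (by linarith) (by linarith)]
  have hcrit : 1 - 1 / (2 * q) ≤ 1 / (2 * q) * a ^ (1 / (2 * q)) := by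
    rw [ha]; field_simp; linarith
  have h := (convexOn_exp_rpow_Ici (by positivity) (rpow_nonneg (by linarith) _)
    hcrit).translate_right a
  have hpre : (fun z => a + z) ⁻¹' Ici a = Ici 0 := by ext; simp
  rwa [hpre] at h
end

section
/- Let V be a finite set, ρ* ∈ (0,1), c_x(η) as in the reaction-diffusion model with F(ρ*) = 0, and ν = ν_{ρ*} the product Bernoulli(ρ*) measure on Ω = {0,1}^V. Let L^r f(η) = Σ_x c_x(η)(f(η^x) − f(η)) where η^x flips the coordinate at x. Then the adjoint in L²(ν) satisfies (L^r)*𝟙(η) = (λ/(2d ρ*)) Σ_x Σ_{y ∈ N(x)} η̄_x η̄_y, where η̄_z = η_z − ρ*. -/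
/-!
Changing variables σ ↦ σˣ (flip at x is an involution) in the adjoint relation with `f` a point
mass at `η` gives `L*𝟙(η) ν(η) = ∑ₓ (c_x(ηˣ) ν(ηˣ) - c_x(η) ν(η))`, the net flux into `η`.
The flip at `x` does not change the neighbour count `S_x = ∑_{y ∈ N(x)} η_y`, and only the factor
of `ν` at `x` changes. Eliminating `b` by `F(ρ*) = 0`, the flux through `x` is
`λ/(2dρ*) · η̄_x (S_x - 2dρ*) · ν(η) = λ/(2dρ*) ∑_{y ∈ N(x)} η̄_x η̄_y · ν(η)`.
-/

open Finset Function

section JumpProcess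

variable {Ω ι : Type*} [Fintype Ω] [Fintype ι] (T : ι → Ω → Ω) (c : Ω → ι → ℝ) (ν : Ω → ℝ)

theorem sum_jump_generator_mul_weight (hT : ∀ x, Involutive (T x)) (f : Ω → ℝ) :
    ∑ σ, (∑ x, c σ x * (f (T x σ) - f σ)) * ν σ
      = ∑ σ, f σ * ∑ x, (c (T x σ) x * ν (T x σ) - c σ x * ν σ) := by
  have hflip : ∀ x, ∑ σ, c σ x * f (T x σ) * ν σ = ∑ σ, f σ * (c (T x σ) x * ν (T x σ)) := by
    intro x
    rw [← Equiv.sum_comp (hT x).toPerm]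
    simp only [Involutive.coe_toPerm, hT x _]
    exact sum_congr rfl fun σ _ => by ring
  simp only [mul_sum, sum_mul, mul_sub, sub_mul]
  rw [sum_comm, sum_comm (f := fun σ x => f σ * (c (T x σ) x * ν (T x σ)) - f σ * (c σ x * ν σ))]
  refine sum_congr rfl fun x _ => ?_
  rw [sum_sub_distrib, sum_sub_distrib, hflip x]
  congr 1
  exact sum_congr rfl fun σ _ => by ring

theorem adjoint_apply_one_mul_weight [DecidableEq Ω] (hT : ∀ x, Involutive (T x)) (L₁ : Ω → ℝ)
    (hadj : ∀ f : Ω → ℝ,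
      ∑ σ, (∑ x, c σ x * (f (T x σ) - f σ)) * ν σ = ∑ σ, f σ * L₁ σ * ν σ)
    (η : Ω) :
    L₁ η * ν η = ∑ x, (c (T x η) x * ν (T x η) - c η x * ν η) := by
  let δ : Ω → ℝ := fun σ => if σ = η then 1 else 0
  have h := (hadj δ).symm.trans (sum_jump_generator_mul_weight T c ν hT δ)
  simpa [δ, ite_mul] using h

end JumpProcess

theorem prod_comp_update_eq_mul_prod_sdiff {V β : Type*} [Fintype V] [DecidableEq V] (w : β → ℝ)
    (η : V → β) (x : V) (v : β) :
    ∏ z, w (update η x v z) = w v * ∏ z ∈ univ \ {x}, w (η z) := by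
  rw [← comp_def, comp_update, prod_update_of_mem (mem_univ x)]
  rfl

theorem flip_flux_single_site (a b lam m ρ S : ℝ) (hm : m ≠ 0) (hρ : ρ ≠ 0)
    (hF : (a + lam * ρ) * (1 - ρ) - b * ρ = 0) (e : Bool) :
    ((a + lam / m * S) * (1 - if !e then 1 else 0) + b * (if !e then 1 else 0))
        * (if !e then ρ else 1 - ρ)
      - ((a + lam / m * S) * (1 - if e then 1 else 0) + b * (if e then 1 else 0))
        * (if e then ρ else 1 - ρ)
      = lam / (m * ρ) * ((if e then 1 else 0) - ρ) * (S - m * ρ) * (if e then ρ else 1 - ρ) := by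
  cases e
  · simp only [Bool.not_false, if_true, if_false, Bool.false_eq_true]
    field_simp
    linear_combination (-ρ * m) * hF
  · simp only [Bool.not_true, if_true, if_false, Bool.false_eq_true]
    field_simp
    linear_combination m * hF

theorem glauber_flip_flux {V : Type*} [Fintype V] [DecidableEq V] (a b lam ρ : ℝ)
    (hρ : ρ ≠ 0) (hF : (a + lam * ρ) * (1 - ρ) - b * ρ = 0) (d : ℕ) (hd : d ≠ 0)
    (N : V → Finset V) (hself : ∀ x, x ∉ N x) (hcard : ∀ x, (N x).card = 2 * d)
    (c : (V → Bool) → V → ℝ)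
    (hc : ∀ η x, c η x
      = (a + lam / (2 * d) * ∑ y ∈ N x, (if η y then (1 : ℝ) else 0)) *
          (1 - (if η x then (1 : ℝ) else 0))
        + b * (if η x then (1 : ℝ) else 0))
    (ν : (V → Bool) → ℝ) (hνdef : ∀ η, ν η = ∏ z : V, (if η z then ρ else 1 - ρ))
    (η : V → Bool) (x : V) :
    c (update η x (!η x)) x * ν (update η x (!η x)) - c η x * ν η
      = lam / (2 * d * ρ) * (∑ y ∈ N x,
          ((if η x then (1 : ℝ) else 0) - ρ) * ((if η y then (1 : ℝ) else 0) - ρ)) * ν η := by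
  obtain ⟨P, hν, hν_flip⟩ : ∃ P, ν η = (if η x then ρ else 1 - ρ) * P ∧
      ν (update η x (!η x)) = (if !η x then ρ else 1 - ρ) * P := by
    simp only [hνdef]
    exact ⟨_, prod_eq_mul_prod_sdiff_singleton_of_mem (mem_univ x) _,
      prod_comp_update_eq_mul_prod_sdiff (fun e : Bool => if e then ρ else 1 - ρ) η x _⟩
  have hS : ∑ y ∈ N x, (if update η x (!η x) y then (1 : ℝ) else 0)
      = ∑ y ∈ N x, (if η y then (1 : ℝ) else 0) :=
    sum_congr rfl fun y hy => by rw [update_of_ne (ne_of_mem_of_not_mem hy (hself x))]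
  have hpair_sum : ∑ y ∈ N x, ((if η x then (1 : ℝ) else 0) - ρ) * ((if η y then 1 else 0) - ρ)
      = ((if η x then 1 else 0) - ρ) * (∑ y ∈ N x, (if η y then (1 : ℝ) else 0) - 2 * d * ρ) := by
    rw [← mul_sum, sum_sub_distrib, sum_const, hcard, nsmul_eq_mul]
    push_cast
    ring
  have hm : (2 * d : ℝ) ≠ 0 := by positivity
  rw [hc, hc, hS, update_self, hν, hν_flip, hpair_sum]
  linear_combination P * flip_flux_single_site a b lam (2 * d) ρ
    (∑ y ∈ N x, if η y then 1 else 0) hm hρ hF (η x)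

theorem glauber_adjoint_one_general (V : Type*) [Fintype V] [DecidableEq V]
    (a b lam ρ : ℝ)
    (hρ : ρ ∈ Set.Ioo (0 : ℝ) 1)
    (hF : (a + lam * ρ) * (1 - ρ) - b * ρ = 0)
    (d : ℕ) (hd : 1 ≤ d)
    (N : V → Finset V)
    (hself : ∀ x, x ∉ N x) (hcard : ∀ x, (N x).card = 2 * d)
    -- rates and measure
    (c : (V → Bool) → V → ℝ)
    (hc : ∀ η x, c η x
      = (a + lam / (2 * d) * ∑ y ∈ N x, (if η y then (1 : ℝ) else 0)) *
          (1 - (if η x then (1 : ℝ) else 0))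
        + b * (if η x then (1 : ℝ) else 0))
    (ν : (V → Bool) → ℝ)
    (hνdef : ∀ η, ν η = ∏ z : V, (if η z then ρ else 1 - ρ))
    (Lstar : ((V → Bool) → ℝ) → ((V → Bool) → ℝ))
    (hadj : ∀ f g : (V → Bool) → ℝ,
      ∑ η : V → Bool,
          (∑ x : V, c η x * (f (Function.update η x (!η x)) - f η)) * g η * ν η
        = ∑ η : V → Bool, f η * Lstar g η * ν η)
    (η : V → Bool) :
    Lstar (fun _ => 1) η
      = lam / (2 * d * ρ) *
          ∑ x : V, ∑ y ∈ N x,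
            ((if η x then (1 : ℝ) else 0) - ρ) * ((if η y then (1 : ℝ) else 0) - ρ) := by
  obtain ⟨hρ0, hρ1⟩ := hρ
  have hνη : ν η ≠ 0 := by
    rw [hνdef]
    exact prod_ne_zero_iff.2 fun z _ => by split_ifs <;> linarith
  have hflip : ∀ x : V, Involutive fun σ : V → Bool => update σ x (!σ x) := fun x σ => by
    simp
  have key := adjoint_apply_one_mul_weight (fun x σ => update σ x (!σ x)) c ν hflip
    (Lstar fun _ => 1) (fun f => by simpa using hadj f fun _ => 1) η
  rw [sum_congr rfl fun x _ => glauber_flip_flux a b lam ρ hρ0.ne' hF d (by omega) N hself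
    hcard c hc ν hνdef η x, ← sum_mul, ← mul_sum] at key
  exact mul_right_cancel₀ hνη key

theorem glauber_adjoint_one (V : Type*) [Fintype V] [DecidableEq V]
    (a b lam ρ : ℝ) (ha : 0 < a) (hb : 0 < b) (hlam : -a < lam)
    (hρ : ρ ∈ Set.Ioo (0 : ℝ) 1)
    (hF : (a + lam * ρ) * (1 - ρ) - b * ρ = 0)
    (d : ℕ) (hd : 1 ≤ d)
    (N : V → Finset V) (hsym : ∀ x y, y ∈ N x ↔ x ∈ N y)
    (hself : ∀ x, x ∉ N x) (hcard : ∀ x, (N x).card = 2 * d)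
    -- rates and measure
    (c : (V → Bool) → V → ℝ)
    (hc : ∀ η x, c η x
      = (a + lam / (2 * d) * ∑ y ∈ N x, (if η y then (1 : ℝ) else 0)) *
          (1 - (if η x then (1 : ℝ) else 0))
        + b * (if η x then (1 : ℝ) else 0))
    (ν : (V → Bool) → ℝ)
    (hνdef : ∀ η, ν η = ∏ z : V, (if η z then ρ else 1 - ρ))
    (Lstar : ((V → Bool) → ℝ) → ((V → Bool) → ℝ))
    (hadj : ∀ f g : (V → Bool) → ℝ,
      ∑ η : V → Bool,
          (∑ x : V, c η x * (f (Function.update η x (!η x)) - f η)) * g η * ν η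
        = ∑ η : V → Bool, f η * Lstar g η * ν η)
    (η : V → Bool) :
    Lstar (fun _ => 1) η
      = lam / (2 * d * ρ) *
          ∑ x : V, ∑ y ∈ N x,
            ((if η x then (1 : ℝ) else 0) - ρ) * ((if η y then (1 : ℝ) else 0) - ρ) :=
  glauber_adjoint_one_general V a b lam ρ hρ hF d hd N hself hcard c hc ν hνdef Lstar hadj η
end
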